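/- arXiv:1202.6678 — 3 statements merged into one kernel-verified Lean document; each statement's English description precedes it below -/
import Mathlib

section
/- Under assumption (H), let (η_p)_{p≥0} be an arbitrary sequence of probability measures on X and define λ_p, Q_{p+1}, Q_{0,n}, h_{0,n} and η_n as in the context. Then for every probability measure μ' on X, every bounded measurable φ, and every n ≥ 1: (i) |(∏_{p=0}^{n−1} λ_p)^{−1} μ'Q_{0,n}(φ) − μ'(h_{0,n})·η_n(φ)| ≤ 2‖φ‖ ρ̃^n (ε⁺/ε⁻); and (ii) |μ'Q_{0,n}(φ)/μ'Q_{0,n}(1) − η_n(φ)| ≤ 2‖φ‖ ρ̃^n (ε⁺/ε⁻)², where ρ̃ := 1 − (ε⁻/ε⁺)². These bounds are uniform in μ' and in the sequence (η_p). -/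
/-!
The normalized operators `P_{p,n}(φ) = Q_{p,n}(φ) / Q_{p,n}(1)` satisfy
`P_{p,n+1}(φ)(x) = ∫ P_{p+1,n}(φ) dπ_x`, where `π_x ∝ Q_{p+1}(x, dx') Q_{p+1,n}(1)(x')`.
The density of `Q_{p+1}(x, ·)` with respect to `η_{p+1}` lies in
`[λ_p ε⁻/ε⁺, λ_p ε⁺/ε⁻]`, so every `π_x` dominates `(ε⁻/ε⁺)²` times one common probability,
and Dobrushin's argument shows that each step contracts the oscillation of `P` by `ρ̃`.
Since `η_p Q_{p+1} = λ_p η_{p+1}`, `η_n(φ)` is itself an average of `P_{0,n}(φ)`, so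
`P_{0,n}(φ)` stays within `2‖φ‖ρ̃ⁿ` of `η_n(φ)`. Integrating against `μ'Q_{0,n}(1)` and using
`Q_{0,n}(1) ≤ (ε⁺/ε⁻) ∏ λ_p` gives both bounds.
-/

open MeasureTheory ProbabilityTheory Filter
open scoped ENNReal

/-- The operator `Q(φ)(x) = G(x) ∫ φ(y) M(x,dy)` associated with the kernel
`Q(x,dy) := G(x) M(x,dy)`. -/
noncomputable def Qop {X : Type*} [MeasurableSpace X] (G : X → ℝ) (M : Kernel X X)
    (φ : X → ℝ) (x : X) : ℝ :=
  G x * ∫ y, φ y ∂(M x)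

/-- The `n`-fold iterate `Q^{(n)}` of the operator `Q`, `Q^{(0)} = Id`. -/
noncomputable def Qiter {X : Type*} [MeasurableSpace X] (G : X → ℝ) (M : Kernel X X) :
    ℕ → (X → ℝ) → X → ℝ
  | 0 => fun φ => φ
  | n + 1 => fun φ => Qop G M (Qiter G M n φ)

/-- The random-flow kernel `Q_{p+1}(φ)(x) = ∫ [η_p(G) q(x,x') / ∫ q(y,x') η_p(dy)] φ(x') η_{p+1}(dx')`,
a version of `(dQ(x,·)/dΦ(η_p))(x') η_{p+1}(dx')` acting on functions. -/
noncomputable def QNop {X : Type*} [MeasurableSpace X] (G : X → ℝ) (q : X → X → ℝ)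
    (η : ℕ → Measure X) (p : ℕ) (φ : X → ℝ) (x : X) : ℝ :=
  ∫ x', (∫ y, G y ∂(η p)) * q x x' / (∫ y, q y x' ∂(η p)) * φ x' ∂(η (p + 1))

/-- `QNgap G q η p k = Q_{p,p+k} = Q_{p+1} Q_{p+2} ⋯ Q_{p+k}` acting on functions,
with `Q_{p,p} = Id`. -/
noncomputable def QNgap {X : Type*} [MeasurableSpace X] (G : X → ℝ) (q : X → X → ℝ)
    (η : ℕ → Measure X) : ℕ → ℕ → (X → ℝ) → X → ℝ
  | _, 0 => fun φ => φ
  | p, k + 1 => fun φ => QNop G q η p (QNgap G q η (p + 1) k φ)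

open Finset Set Function

section WeightedAverage

variable {Ω : Type*} [MeasurableSpace Ω] {μ : Measure Ω} {w w₁ w₂ v h : Ω → ℝ} {s t c d : ℝ}

lemma integral_pos_of_pos [NeZero μ] (hw : ∀ u, 0 < w u) (hwi : Integrable w μ) :
    0 < ∫ u, w u ∂μ := by
  rw [integral_pos_iff_support_of_nonneg (fun u => (hw u).le) hwi,
    support_eq_univ fun u => (hw u).ne']
  exact Measure.measure_univ_pos.2 (NeZero.ne μ)

lemma integral_mul_mem_Icc (hw0 : ∀ u, 0 ≤ w u) (hw : Integrable w μ)
    (hh : AEStronglyMeasurable h μ) (hs : ∀ u, s ≤ h u) (ht : ∀ u, h u ≤ t) :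
    ∫ u, w u * h u ∂μ ∈ Icc (s * ∫ u, w u ∂μ) (t * ∫ u, w u ∂μ) := by
  have hwh : Integrable (fun u => w u * h u) μ :=
    hw.mul_bdd hh (ae_of_all _ fun u => abs_le_max_abs_abs (hs u) (ht u))
  rw [← integral_const_mul, ← integral_const_mul]
  exact ⟨integral_mono (hw.const_mul s) hwh fun u => by nlinarith [hw0 u, hs u],
    integral_mono hwh (hw.const_mul t) fun u => by nlinarith [hw0 u, ht u]⟩

lemma integral_mem_Icc [IsProbabilityMeasure μ] (hh : AEStronglyMeasurable h μ)
    (hs : ∀ u, s ≤ h u) (ht : ∀ u, h u ≤ t) : ∫ u, h u ∂μ ∈ Icc s t := by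
  simpa using integral_mul_mem_Icc (w := 1) (fun _ => zero_le_one) (integrable_const 1) hh hs ht

noncomputable def weightedAverage (μ : Measure Ω) (w h : Ω → ℝ) : ℝ :=
  (∫ u, w u * h u ∂μ) / ∫ u, w u ∂μ

lemma weightedAverage_mem_Icc (hw0 : ∀ u, 0 ≤ w u) (hw : Integrable w μ)
    (hw_pos : 0 < ∫ u, w u ∂μ) (hh : AEStronglyMeasurable h μ) (hs : ∀ u, s ≤ h u)
    (ht : ∀ u, h u ≤ t) : weightedAverage μ w h ∈ Icc s t := by
  obtain ⟨hlow, hup⟩ := integral_mul_mem_Icc hw0 hw hh hs ht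
  exact ⟨(le_div_iff₀ hw_pos).2 hlow, (div_le_iff₀ hw_pos).2 hup⟩

/-- Doeblin's decomposition: under the minorization, the `w`-average is `c` times the
`v`-average plus `1 - c` times an average against the remainder `w / μ(w) - c • v / μ(v)`. -/
lemma weightedAverage_sub_mem_Icc (hmin : ∀ u, c * (v u / ∫ u, v u ∂μ) ≤ w u / ∫ u, w u ∂μ)
    (hw : Integrable w μ) (hv : Integrable v μ) (hw_pos : 0 < ∫ u, w u ∂μ)
    (hv_pos : 0 < ∫ u, v u ∂μ) (hh : AEStronglyMeasurable h μ) (hs : ∀ u, s ≤ h u)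
    (ht : ∀ u, h u ≤ t) :
    weightedAverage μ w h - c * weightedAverage μ v h ∈ Icc ((1 - c) * s) ((1 - c) * t) := by
  set ρ : Ω → ℝ := fun u => w u / ∫ u, w u ∂μ - c * (v u / ∫ u, v u ∂μ)
  have hρ : Integrable ρ μ := (hw.div_const _).sub ((hv.div_const _).const_mul c)
  have hbdd : ∀ u, |h u| ≤ max |s| |t| := fun u => abs_le_max_abs_abs (hs u) (ht u)
  have hwh := hw.mul_bdd hh (ae_of_all _ hbdd)
  have hvh := hv.mul_bdd hh (ae_of_all _ hbdd)
  have hρ_mass : ∫ u, ρ u ∂μ = 1 - c := by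
    rw [integral_sub (hw.div_const _) ((hv.div_const _).const_mul c), integral_const_mul,
      integral_div, integral_div, div_self hw_pos.ne', div_self hv_pos.ne', mul_one]
  have hρh : ∫ u, ρ u * h u ∂μ = weightedAverage μ w h - c * weightedAverage μ v h := by
    simp only [ρ, weightedAverage, sub_mul, mul_assoc, div_mul_eq_mul_div]
    rw [integral_sub (hwh.div_const _) ((hvh.div_const _).const_mul c), integral_const_mul,
      integral_div, integral_div]
  rw [← hρh, ← hρ_mass, mul_comm _ s, mul_comm _ t]
  exact integral_mul_mem_Icc (fun u => sub_nonneg.2 (hmin u)) hρ hh hs ht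

/-- Dobrushin's contraction estimate. -/
lemma abs_weightedAverage_sub_le (hmin₁ : ∀ u, c * (v u / ∫ u, v u ∂μ) ≤ w₁ u / ∫ u, w₁ u ∂μ)
    (hmin₂ : ∀ u, c * (v u / ∫ u, v u ∂μ) ≤ w₂ u / ∫ u, w₂ u ∂μ)
    (hw₁ : Integrable w₁ μ) (hw₂ : Integrable w₂ μ) (hv : Integrable v μ)
    (hw₁_pos : 0 < ∫ u, w₁ u ∂μ) (hw₂_pos : 0 < ∫ u, w₂ u ∂μ) (hv_pos : 0 < ∫ u, v u ∂μ)
    (hh : AEStronglyMeasurable h μ) (hosc : ∀ u u', |h u - h u'| ≤ d) :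
    |weightedAverage μ w₁ h - weightedAverage μ w₂ h| ≤ (1 - c) * d := by
  obtain ⟨s, hs, ht⟩ : ∃ s, (∀ u, s ≤ h u) ∧ ∀ u, h u ≤ s + d := by
    rcases isEmpty_or_nonempty Ω with hΩ | hΩ
    · exact ⟨0, isEmptyElim, isEmptyElim⟩
    obtain ⟨u₀⟩ := id hΩ
    have hbdd : BddBelow (range h) :=
      ⟨h u₀ - d, by rintro _ ⟨u, rfl⟩; linarith [(abs_le.1 (hosc u₀ u)).2]⟩
    refine ⟨⨅ u, h u, fun u => ciInf_le hbdd u, fun u => ?_⟩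
    have : h u - d ≤ ⨅ u, h u := le_ciInf fun u' => by linarith [(abs_le.1 (hosc u u')).2]
    linarith
  have h₁ := weightedAverage_sub_mem_Icc hmin₁ hw₁ hv hw₁_pos hv_pos hh hs ht
  have h₂ := weightedAverage_sub_mem_Icc hmin₂ hw₂ hv hw₂_pos hv_pos hh hs ht
  rw [abs_le]
  constructor <;> linarith [h₁.1, h₁.2, h₂.1, h₂.2]

lemma abs_weightedAverage_kernel_sub_le {ι : Type*} {k : ι → Ω → ℝ} {g : Ω → ℝ} {α β : ℝ}
    (hα : 0 < α) (hk : ∀ x u, k x u ∈ Icc α β) (hkm : ∀ x, AEStronglyMeasurable (k x) μ)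
    (hg0 : ∀ u, 0 ≤ g u) (hg : Integrable g μ) (hg_pos : 0 < ∫ u, g u ∂μ)
    (hh : AEStronglyMeasurable h μ) (hosc : ∀ u u', |h u - h u'| ≤ d) (x y : ι) :
    |weightedAverage μ (fun u => k x u * g u) h - weightedAverage μ (fun u => k y u * g u) h|
      ≤ (1 - α / β) * d := by
  have hminorize : ∀ x, Integrable (fun u => k x u * g u) μ ∧ 0 < ∫ u, k x u * g u ∂μ ∧
      ∀ u, α / β * (g u / ∫ u, g u ∂μ) ≤ k x u * g u / ∫ u, k x u * g u ∂μ := by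
    intro x
    have hkg : Integrable (fun u => k x u * g u) μ := hg.bdd_mul (hkm x)
      (ae_of_all _ fun u => abs_le_abs_of_nonneg (hα.le.trans (hk x u).1) (hk x u).2)
    have hlow : α * ∫ u, g u ∂μ ≤ ∫ u, k x u * g u ∂μ := by
      rw [← integral_const_mul]
      exact integral_mono (hg.const_mul α) hkg fun u =>
        mul_le_mul_of_nonneg_right (hk x u).1 (hg0 u)
    have hup : ∫ u, k x u * g u ∂μ ≤ β * ∫ u, g u ∂μ := by
      rw [← integral_const_mul]
      exact integral_mono hkg (hg.const_mul β) fun u =>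
        mul_le_mul_of_nonneg_right (hk x u).2 (hg0 u)
    have hZ : 0 < ∫ u, k x u * g u ∂μ := (mul_pos hα hg_pos).trans_le hlow
    refine ⟨hkg, hZ, fun u => ?_⟩
    have hβ : 0 < β := hα.trans_le ((hk x u).1.trans (hk x u).2)
    rw [← mul_div_assoc, div_mul_eq_mul_div, div_div, div_le_div_iff₀ (by positivity) hZ]
    calc α * g u * ∫ u, k x u * g u ∂μ ≤ α * g u * (β * ∫ u, g u ∂μ) :=
          mul_le_mul_of_nonneg_left hup (mul_nonneg hα.le (hg0 u))
      _ ≤ k x u * g u * (β * ∫ u, g u ∂μ) :=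
          mul_le_mul_of_nonneg_right (mul_le_mul_of_nonneg_right (hk x u).1 (hg0 u))
            (by positivity)
  obtain ⟨hx, hx_pos, hx_min⟩ := hminorize x
  obtain ⟨hy, hy_pos, hy_min⟩ := hminorize y
  exact abs_weightedAverage_sub_le hx_min hy_min hx hy hg hx_pos hy_pos hg_pos hh hosc

end WeightedAverage

lemma prod_range_succ_add {M : Type*} [CommMonoid M] (f : ℕ → M) (p k : ℕ) :
    ∏ j ∈ range (k + 1), f (p + j) = f p * ∏ j ∈ range k, f (p + 1 + j) := by
  rw [prod_range_succ', mul_comm]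
  simp only [add_zero, add_right_comm p 1, add_assoc]

structure FlowAssumptions {X : Type*} [MeasurableSpace X] (G : X → ℝ) (q : X → X → ℝ)
    (εm εp : ℝ) (η : ℕ → Measure X) : Prop where
  measurable_q : Measurable fun z : X × X => q z.1 z.2
  εm_pos : 0 < εm
  εm_le_εp : εm ≤ εp
  q_mem_Icc : ∀ x y, q x y ∈ Icc εm εp
  integral_G_pos : ∀ p, 0 < ∫ y, G y ∂(η p)

/-- The density of `Q_{p+1}(x, ·)` with respect to `η_{p+1}`. -/
noncomputable def flowDensity {X : Type*} [MeasurableSpace X] (G : X → ℝ) (q : X → X → ℝ)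
    (η : ℕ → Measure X) (p : ℕ) (x x' : X) : ℝ :=
  (∫ y, G y ∂(η p)) * q x x' / ∫ y, q y x' ∂(η p)

lemma QNop_eq_integral_flowDensity {X : Type*} [MeasurableSpace X] (G : X → ℝ)
    (q : X → X → ℝ) (η : ℕ → Measure X) (p : ℕ) (ψ : X → ℝ) (x : X) :
    QNop G q η p ψ x = ∫ x', flowDensity G q η p x x' * ψ x' ∂(η (p + 1)) := rfl

noncomputable def normalizedQNgap {X : Type*} [MeasurableSpace X] (G : X → ℝ)
    (q : X → X → ℝ) (η : ℕ → Measure X) (p k : ℕ) (φ : X → ℝ) (x : X) : ℝ :=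
  QNgap G q η p k φ x / QNgap G q η p k (fun _ => 1) x

namespace FlowAssumptions

variable {X : Type*} [MeasurableSpace X] {G : X → ℝ} {q : X → X → ℝ} {εm εp : ℝ}
  {η : ℕ → Measure X} {φ ψ : X → ℝ} {b C : ℝ}

lemma εp_pos (hF : FlowAssumptions G q εm εp η) : 0 < εp := hF.εm_pos.trans_le hF.εm_le_εp

variable [∀ p, IsProbabilityMeasure (η p)]

lemma integral_q_mem_Icc (hF : FlowAssumptions G q εm εp η) (p : ℕ) (x' : X) :
    ∫ y, q y x' ∂(η p) ∈ Icc εm εp :=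
  integral_mem_Icc
    (hF.measurable_q.comp (measurable_id.prodMk measurable_const)).aestronglyMeasurable
    (fun y => (hF.q_mem_Icc y x').1) (fun y => (hF.q_mem_Icc y x').2)

lemma measurable_flowDensity (hF : FlowAssumptions G q εm εp η) (p : ℕ) :
    Measurable fun z : X × X => flowDensity G q η p z.1 z.2 :=
  (measurable_const.mul hF.measurable_q).div
    (hF.measurable_q.stronglyMeasurable.integral_prod_left'.measurable.comp measurable_snd)

lemma measurable_flowDensity_right (hF : FlowAssumptions G q εm εp η) (p : ℕ) (x : X) :
    Measurable (flowDensity G q η p x) :=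
  (hF.measurable_flowDensity p).comp (measurable_const.prodMk measurable_id)

lemma flowDensity_mem_Icc (hF : FlowAssumptions G q εm εp η) (p : ℕ) (x x' : X) :
    flowDensity G q η p x x' ∈
      Icc ((∫ y, G y ∂(η p)) * (εm / εp)) ((∫ y, G y ∂(η p)) * (εp / εm)) := by
  obtain ⟨hq_lb, hq_ub⟩ := hF.q_mem_Icc x x'
  obtain ⟨hd_lb, hd_ub⟩ := hF.integral_q_mem_Icc p x'
  have hG := (hF.integral_G_pos p).le
  rw [flowDensity, mul_div_assoc]
  exact ⟨mul_le_mul_of_nonneg_left (div_le_div₀ (hF.εm_pos.le.trans hq_lb) hq_lb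
      (hF.εm_pos.trans_le hd_lb) hd_ub) hG,
    mul_le_mul_of_nonneg_left (div_le_div₀ hF.εp_pos.le hq_ub hF.εm_pos hd_lb) hG⟩

lemma integral_flowDensity (hF : FlowAssumptions G q εm εp η) (p : ℕ) (x' : X) :
    ∫ x, flowDensity G q η p x x' ∂(η p) = ∫ y, G y ∂(η p) := by
  have hd : ∫ y, q y x' ∂(η p) ≠ 0 := (hF.εm_pos.trans_le (hF.integral_q_mem_Icc p x').1).ne'
  simp_rw [flowDensity, mul_div_right_comm _ (q _ x'), integral_const_mul]
  exact div_mul_cancel₀ _ hd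

lemma norm_flowDensity_mul_le (hF : FlowAssumptions G q εm εp η) (hψ : ∀ x, |ψ x| ≤ C)
    (p : ℕ) (x x' : X) :
    ‖flowDensity G q η p x x' * ψ x'‖ ≤ (∫ y, G y ∂(η p)) * (εp / εm) * C := by
  obtain ⟨hlb, hub⟩ := hF.flowDensity_mem_Icc p x x'
  have : 0 ≤ (∫ y, G y ∂(η p)) * (εm / εp) :=
    mul_nonneg (hF.integral_G_pos p).le (div_nonneg hF.εm_pos.le hF.εp_pos.le)
  rw [Real.norm_eq_abs, abs_mul, abs_of_nonneg (this.trans hlb)]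
  exact mul_le_mul hub (hψ x') (abs_nonneg _) ((this.trans hlb).trans hub)

lemma flowDensity_pos (hF : FlowAssumptions G q εm εp η) (p : ℕ) (x x' : X) :
    0 < flowDensity G q η p x x' :=
  (mul_pos (hF.integral_G_pos p) (div_pos hF.εm_pos hF.εp_pos)).trans_le
    (hF.flowDensity_mem_Icc p x x').1

lemma integrable_flowDensity_mul (hF : FlowAssumptions G q εm εp η) (hψm : Measurable ψ)
    (hψ : ∀ x, |ψ x| ≤ C) (p : ℕ) (x : X) :
    Integrable (fun x' => flowDensity G q η p x x' * ψ x') (η (p + 1)) :=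
  .of_bound ((hF.measurable_flowDensity_right p x).mul hψm).aestronglyMeasurable _
    (ae_of_all _ (hF.norm_flowDensity_mul_le hψ p x))

lemma measurable_QNop (hF : FlowAssumptions G q εm εp η) (hψ : Measurable ψ) (p : ℕ) :
    Measurable (QNop G q η p ψ) :=
  ((hF.measurable_flowDensity p).mul (hψ.comp measurable_snd)).stronglyMeasurable
    |>.integral_prod_right'.measurable

lemma abs_QNop_le (hF : FlowAssumptions G q εm εp η) (hψ : ∀ x, |ψ x| ≤ C) (p : ℕ) (x : X) :
    |QNop G q η p ψ x| ≤ (∫ y, G y ∂(η p)) * (εp / εm) * C := by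
  simpa [QNop_eq_integral_flowDensity] using norm_integral_le_of_norm_le_const (μ := η (p + 1))
    (ae_of_all _ (hF.norm_flowDensity_mul_le hψ p x))

lemma integral_QNop (hF : FlowAssumptions G q εm εp η) (hψm : Measurable ψ)
    (hψ : ∀ x, |ψ x| ≤ C) (p : ℕ) :
    ∫ x, QNop G q η p ψ x ∂(η p) = (∫ y, G y ∂(η p)) * ∫ x', ψ x' ∂(η (p + 1)) := by
  have hint : Integrable (uncurry fun x x' => flowDensity G q η p x x' * ψ x')
      ((η p).prod (η (p + 1))) :=
    .of_bound ((hF.measurable_flowDensity p).mul (hψm.comp measurable_snd)).aestronglyMeasurable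
      _ (ae_of_all _ fun z => hF.norm_flowDensity_mul_le hψ p z.1 z.2)
  calc ∫ x, QNop G q η p ψ x ∂(η p)
      = ∫ x', ∫ x, flowDensity G q η p x x' * ψ x' ∂(η p) ∂(η (p + 1)) :=
        integral_integral_swap hint
    _ = ∫ x', (∫ y, G y ∂(η p)) * ψ x' ∂(η (p + 1)) := by
        simp_rw [integral_mul_const, hF.integral_flowDensity]
    _ = _ := integral_const_mul _ _

lemma measurable_QNgap (hF : FlowAssumptions G q εm εp η) (hψ : Measurable ψ) :
    ∀ k p, Measurable (QNgap G q η p k ψ)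
  | 0, _ => hψ
  | k + 1, p => hF.measurable_QNop (hF.measurable_QNgap hψ k (p + 1)) p

lemma exists_abs_QNgap_le (hF : FlowAssumptions G q εm εp η) (hψ : ∀ x, |ψ x| ≤ C) :
    ∀ k p, ∃ C', ∀ x, |QNgap G q η p k ψ x| ≤ C'
  | 0, _ => ⟨C, hψ⟩
  | k + 1, p =>
    have ⟨_, hC'⟩ := hF.exists_abs_QNgap_le hψ k (p + 1)
    ⟨_, hF.abs_QNop_le hC' p⟩

lemma integrable_QNgap (hF : FlowAssumptions G q εm εp η) (hψm : Measurable ψ)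
    (hψ : ∀ x, |ψ x| ≤ C) (μ : Measure X) [IsFiniteMeasure μ] (k p : ℕ) :
    Integrable (QNgap G q η p k ψ) μ :=
  have ⟨C', hC'⟩ := hF.exists_abs_QNgap_le hψ k p
  .of_bound (hF.measurable_QNgap hψm k p).aestronglyMeasurable C' (ae_of_all _ hC')

lemma integral_QNgap (hF : FlowAssumptions G q εm εp η) (hψm : Measurable ψ)
    (hψ : ∀ x, |ψ x| ≤ C) : ∀ k p, ∫ x, QNgap G q η p k ψ x ∂(η p) =
      (∏ j ∈ range k, ∫ y, G y ∂(η (p + j))) * ∫ x, ψ x ∂(η (p + k))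
  | 0, p => by simp [QNgap]
  | k + 1, p => by
    obtain ⟨C', hC'⟩ := hF.exists_abs_QNgap_le hψ k (p + 1)
    rw [QNgap, hF.integral_QNop (hF.measurable_QNgap hψm k (p + 1)) hC',
      hF.integral_QNgap hψm hψ k (p + 1), prod_range_succ_add (fun j => ∫ y, G y ∂(η j)),
      add_right_comm, mul_assoc, ← add_assoc]

lemma QNgap_one_pos (hF : FlowAssumptions G q εm εp η) :
    ∀ k p x, 0 < QNgap G q η p k (fun _ => 1) x
  | 0, _, _ => one_pos
  | k + 1, p, x =>
    have ⟨_, hC⟩ := hF.exists_abs_QNgap_le (ψ := fun _ => 1) (fun _ => abs_one.le) k (p + 1)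
    integral_pos_of_pos
      (fun x' => mul_pos (hF.flowDensity_pos p x x') (hF.QNgap_one_pos k (p + 1) x'))
      (hF.integrable_flowDensity_mul (hF.measurable_QNgap measurable_const k (p + 1)) hC p x)

lemma QNgap_one_le (hF : FlowAssumptions G q εm εp η) (k p : ℕ) (x : X) :
    QNgap G q η p k (fun _ => 1) x ≤ εp / εm * ∏ j ∈ range k, ∫ y, G y ∂(η (p + j)) := by
  cases k with
  | zero => simpa [QNgap] using (one_le_div hF.εm_pos).2 hF.εm_le_εp
  | succ k =>
    have hg : Measurable (QNgap G q η (p + 1) k fun _ => 1) :=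
      hF.measurable_QNgap measurable_const k (p + 1)
    obtain ⟨_, hC⟩ := hF.exists_abs_QNgap_le (ψ := fun _ => 1) (fun _ => abs_one.le) k (p + 1)
    calc QNgap G q η p (k + 1) (fun _ => 1) x
        = ∫ x', flowDensity G q η p x x' * QNgap G q η (p + 1) k (fun _ => 1) x' ∂(η (p + 1)) :=
          rfl
      _ ≤ ∫ x', (∫ y, G y ∂(η p)) * (εp / εm) * QNgap G q η (p + 1) k (fun _ => 1) x'
            ∂(η (p + 1)) :=
          integral_mono (hF.integrable_flowDensity_mul hg hC p x)
            ((hF.integrable_QNgap measurable_const (fun _ => abs_one.le) _ k (p + 1)).const_mul _)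
            fun x' => mul_le_mul_of_nonneg_right (hF.flowDensity_mem_Icc p x x').2
              (hF.QNgap_one_pos k (p + 1) x').le
      _ = εp / εm * ∏ j ∈ range (k + 1), ∫ y, G y ∂(η (p + j)) := by
          rw [integral_const_mul, hF.integral_QNgap measurable_const (fun _ => abs_one.le),
            prod_range_succ_add (fun j => ∫ y, G y ∂(η j))]
          simp only [integral_const, probReal_univ, smul_eq_mul, mul_one]
          ring

lemma integral_QNgap_one_le (hF : FlowAssumptions G q εm εp η) (μ : Measure X)
    [IsProbabilityMeasure μ] (k p : ℕ) :
    ∫ x, QNgap G q η p k (fun _ => 1) x ∂μ ≤ εp / εm * ∏ j ∈ range k, ∫ y, G y ∂(η (p + j)) :=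
  (integral_mem_Icc (hF.measurable_QNgap measurable_const k p).aestronglyMeasurable
    (fun x => (hF.QNgap_one_pos k p x).le) (hF.QNgap_one_le k p)).2

lemma QNgap_one_mul_normalizedQNgap (hF : FlowAssumptions G q εm εp η) (k p : ℕ) (x : X) :
    QNgap G q η p k (fun _ => 1) x * normalizedQNgap G q η p k φ x = QNgap G q η p k φ x :=
  mul_div_cancel₀ _ (hF.QNgap_one_pos k p x).ne'

lemma normalizedQNgap_succ (hF : FlowAssumptions G q εm εp η) (k p : ℕ) (x : X) :
    normalizedQNgap G q η p (k + 1) φ x =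
      weightedAverage (η (p + 1))
        (fun x' => flowDensity G q η p x x' * QNgap G q η (p + 1) k (fun _ => 1) x')
        (normalizedQNgap G q η (p + 1) k φ) := by
  simp_rw [weightedAverage, mul_assoc, hF.QNgap_one_mul_normalizedQNgap]
  rfl

lemma measurable_normalizedQNgap (hF : FlowAssumptions G q εm εp η) (hφ : Measurable φ)
    (k p : ℕ) : Measurable (normalizedQNgap G q η p k φ) :=
  (hF.measurable_QNgap hφ k p).div (hF.measurable_QNgap measurable_const k p)

lemma abs_normalizedQNgap_sub_le (hF : FlowAssumptions G q εm εp η) (hφm : Measurable φ)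
    (hφ : ∀ x, |φ x| ≤ b) : ∀ k p x y,
      |normalizedQNgap G q η p k φ x - normalizedQNgap G q η p k φ y|
        ≤ 2 * b * (1 - (εm / εp) ^ 2) ^ k
  | 0, p, x, y => by
    simpa [normalizedQNgap, QNgap, two_mul] using
      (abs_sub _ _).trans (add_le_add (hφ x) (hφ y))
  | k + 1, p, x, y => by
    have hG := hF.integral_G_pos p
    have hg := hF.integrable_QNgap measurable_const (fun _ => abs_one.le) (η (p + 1)) k (p + 1)
    have hcontract := abs_weightedAverage_kernel_sub_le
      (mul_pos hG (div_pos hF.εm_pos hF.εp_pos)) (hF.flowDensity_mem_Icc p)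
      (fun x => (hF.measurable_flowDensity_right p x).aestronglyMeasurable)
      (fun u => (hF.QNgap_one_pos k (p + 1) u).le) hg
      (integral_pos_of_pos (hF.QNgap_one_pos k (p + 1)) hg)
      (hF.measurable_normalizedQNgap hφm k (p + 1)).aestronglyMeasurable
      (hF.abs_normalizedQNgap_sub_le hφm hφ k (p + 1)) x y
    have hratio : (∫ y, G y ∂(η p)) * (εm / εp) / ((∫ y, G y ∂(η p)) * (εp / εm))
        = (εm / εp) ^ 2 := by
      have := hF.εm_pos.ne'; have := hF.εp_pos.ne'
      field_simp
    rw [hF.normalizedQNgap_succ, hF.normalizedQNgap_succ, pow_succ]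
    calc _ ≤ _ := hcontract
      _ = _ := by rw [hratio]; ring

lemma weightedAverage_normalizedQNgap (hF : FlowAssumptions G q εm εp η) (hφm : Measurable φ)
    (hφ : ∀ x, |φ x| ≤ b) (k p : ℕ) :
    weightedAverage (η p) (QNgap G q η p k fun _ => 1) (normalizedQNgap G q η p k φ)
      = ∫ x, φ x ∂(η (p + k)) := by
  have hprod : 0 < ∏ j ∈ range k, ∫ y, G y ∂(η (p + j)) :=
    prod_pos fun j _ => hF.integral_G_pos (p + j)
  simp_rw [weightedAverage, hF.QNgap_one_mul_normalizedQNgap]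
  rw [hF.integral_QNgap hφm hφ, hF.integral_QNgap measurable_const (fun _ => abs_one.le)]
  simp [hprod.ne']

lemma abs_normalizedQNgap_sub_integral_le (hF : FlowAssumptions G q εm εp η)
    (hφm : Measurable φ) (hφ : ∀ x, |φ x| ≤ b) (k p : ℕ) (x : X) :
    |normalizedQNgap G q η p k φ x - ∫ x, φ x ∂(η (p + k))| ≤ 2 * b * (1 - (εm / εp) ^ 2) ^ k := by
  set d := 2 * b * (1 - (εm / εp) ^ 2) ^ k
  set r := normalizedQNgap G q η p k φ
  have hosc := hF.abs_normalizedQNgap_sub_le hφm hφ k p x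
  have hg := hF.integrable_QNgap measurable_const (fun _ => abs_one.le) (η p) k p
  obtain ⟨hlow, hup⟩ := weightedAverage_mem_Icc (s := r x - d) (t := r x + d)
    (fun u => (hF.QNgap_one_pos k p u).le) hg
    (integral_pos_of_pos (hF.QNgap_one_pos k p) hg)
    (hF.measurable_normalizedQNgap hφm k p).aestronglyMeasurable
    (fun y => by linarith [(abs_le.1 (hosc y)).2]) (fun y => by linarith [(abs_le.1 (hosc y)).1])
  rw [hF.weightedAverage_normalizedQNgap hφm hφ] at hlow hup
  exact abs_le.2 ⟨by linarith, by linarith⟩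

lemma abs_integral_QNgap_sub_le (hF : FlowAssumptions G q εm εp η) (hφm : Measurable φ)
    (hφ : ∀ x, |φ x| ≤ b) (μ : Measure X) [IsProbabilityMeasure μ] (k p : ℕ) :
    |∫ x, QNgap G q η p k φ x ∂μ - (∫ x, QNgap G q η p k (fun _ => 1) x ∂μ) * ∫ x, φ x ∂(η (p + k))|
      ≤ 2 * b * (1 - (εm / εp) ^ 2) ^ k * ∫ x, QNgap G q η p k (fun _ => 1) x ∂μ := by
  set d := 2 * b * (1 - (εm / εp) ^ 2) ^ k
  set E := ∫ x, φ x ∂(η (p + k))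
  have hclose := hF.abs_normalizedQNgap_sub_integral_le hφm hφ k p
  obtain ⟨hlow, hup⟩ := integral_mul_mem_Icc (s := E - d) (t := E + d)
    (fun u => (hF.QNgap_one_pos k p u).le)
    (hF.integrable_QNgap measurable_const (fun _ => abs_one.le) μ k p)
    (hF.measurable_normalizedQNgap hφm k p).aestronglyMeasurable
    (fun y => by linarith [(abs_le.1 (hclose y)).1])
    (fun y => by linarith [(abs_le.1 (hclose y)).2])
  simp_rw [hF.QNgap_one_mul_normalizedQNgap] at hlow hup
  exact abs_le.2 ⟨by linarith, by linarith⟩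

end FlowAssumptions

theorem stmt16_general {X : Type*} [MeasurableSpace X]
    (G : X → ℝ)
    (q : X → X → ℝ) (εm εp : ℝ)
    (hq_meas : Measurable fun p : X × X => q p.1 p.2)
    (hεm_pos : 0 < εm) (hεle : εm ≤ εp)
    (hq_lb : ∀ x y, εm ≤ q x y) (hq_ub : ∀ x y, q x y ≤ εp)
    (hG_meas : Measurable G) (hG_pos : ∀ x, 0 < G x) (hG_bdd : ∃ c, ∀ x, G x ≤ c)
    (η : ℕ → Measure X) (hη : ∀ p, IsProbabilityMeasure (η p))
    (μ' : Measure X) [IsProbabilityMeasure μ']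
    (φ : X → ℝ) (hφ_meas : Measurable φ) (b : ℝ) (hφ_b : ∀ x, |φ x| ≤ b)
    (n : ℕ) :
    -- (i) path-wise multiplicative ergodic bound
    |(∏ p ∈ Finset.range n, ∫ y, G y ∂(η p))⁻¹ * ∫ x, QNgap G q η 0 n φ x ∂μ'
        - (∫ x, (QNgap G q η 0 n (fun _ => (1 : ℝ)) x /
            ∫ w, QNgap G q η 0 n (fun _ => (1 : ℝ)) w ∂(η 0)) ∂μ') * ∫ x, φ x ∂(η n)|
      ≤ 2 * b * (1 - (εm / εp) ^ 2) ^ n * (εp / εm) ∧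
    -- (ii) path-wise stability of the normalized semigroup
    |(∫ x, QNgap G q η 0 n φ x ∂μ') / (∫ x, QNgap G q η 0 n (fun _ => (1 : ℝ)) x ∂μ')
        - ∫ x, φ x ∂(η n)|
      ≤ 2 * b * (1 - (εm / εp) ^ 2) ^ n * (εp / εm) ^ 2 := by
  obtain ⟨c, hc⟩ := hG_bdd
  have hF : FlowAssumptions G q εm εp η :=
    ⟨hq_meas, hεm_pos, hεle, fun x y => ⟨hq_lb x y, hq_ub x y⟩, fun p =>
      integral_pos_of_pos hG_pos (.of_bound hG_meas.aestronglyMeasurable c (ae_of_all _ fun x =>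
        (abs_of_pos (hG_pos x)).trans_le (hc x)))⟩
  set A := ∫ x, QNgap G q η 0 n φ x ∂μ'
  set B := ∫ x, QNgap G q η 0 n (fun _ => 1) x ∂μ'
  set E := ∫ x, φ x ∂(η n)
  set L := ∏ p ∈ range n, ∫ y, G y ∂(η p)
  set d := 2 * b * (1 - (εm / εp) ^ 2) ^ n
  have hL : 0 < L := prod_pos fun p _ => hF.integral_G_pos p
  have hB : 0 < B := integral_pos_of_pos (hF.QNgap_one_pos n 0)
    (hF.integrable_QNgap measurable_const (fun _ => abs_one.le) μ' n 0)
  have hBL : B ≤ εp / εm * L := by simpa using hF.integral_QNgap_one_le μ' n 0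
  have hη₀ : ∫ x, QNgap G q η 0 n (fun _ => 1) x ∂(η 0) = L := by
    simpa using hF.integral_QNgap measurable_const (fun _ => abs_one.le) n 0
  have key : |A - B * E| ≤ d * B := by
    simpa using hF.abs_integral_QNgap_sub_le hφ_meas hφ_b μ' n 0
  have hd : 0 ≤ d := nonneg_of_mul_nonneg_left ((abs_nonneg _).trans key) hB
  constructor
  · rw [hη₀, integral_div, show L⁻¹ * A - B / L * E = (A - B * E) / L by ring, abs_div,
      abs_of_pos hL, div_le_iff₀ hL]
    calc |A - B * E| ≤ d * B := key
      _ ≤ d * (εp / εm * L) := mul_le_mul_of_nonneg_left hBL hd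
      _ = d * (εp / εm) * L := by ring
  · rw [show A / B - E = (A - B * E) / B by field_simp, abs_div, abs_of_pos hB, div_le_iff₀ hB]
    calc |A - B * E| ≤ d * B := key
      _ ≤ d * (εp / εm) ^ 2 * B := by
        gcongr
        exact le_mul_of_one_le_right hd (one_le_pow₀ ((one_le_div hεm_pos).2 hεle))

theorem stmt16 {X : Type*} [MeasurableSpace X]
    (G : X → ℝ) (M : Kernel X X) [IsMarkovKernel M]
    (ν : Measure X) [IsProbabilityMeasure ν]
    (q : X → X → ℝ) (εm εp : ℝ)
    (hq_meas : Measurable fun p : X × X => q p.1 p.2)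
    (hεm_pos : 0 < εm) (hεle : εm ≤ εp)
    (hq_lb : ∀ x y, εm ≤ q x y) (hq_ub : ∀ x y, q x y ≤ εp)
    (hG_meas : Measurable G) (hG_pos : ∀ x, 0 < G x) (hG_bdd : ∃ c, ∀ x, G x ≤ c)
    (hH : ∀ x (A : Set X), MeasurableSet A →
      ENNReal.ofReal (G x) * M x A = ∫⁻ y in A, ENNReal.ofReal (q x y) ∂ν)
    (η : ℕ → Measure X) (hη : ∀ p, IsProbabilityMeasure (η p))
    (μ' : Measure X) [IsProbabilityMeasure μ']
    (φ : X → ℝ) (hφ_meas : Measurable φ) (b : ℝ) (hφ_b : ∀ x, |φ x| ≤ b)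
    (n : ℕ) (hn : 1 ≤ n) :
    -- (i) path-wise multiplicative ergodic bound
    |(∏ p ∈ Finset.range n, ∫ y, G y ∂(η p))⁻¹ * ∫ x, QNgap G q η 0 n φ x ∂μ'
        - (∫ x, (QNgap G q η 0 n (fun _ => (1 : ℝ)) x /
            ∫ w, QNgap G q η 0 n (fun _ => (1 : ℝ)) w ∂(η 0)) ∂μ') * ∫ x, φ x ∂(η n)|
      ≤ 2 * b * (1 - (εm / εp) ^ 2) ^ n * (εp / εm) ∧
    -- (ii) path-wise stability of the normalized semigroup
    |(∫ x, QNgap G q η 0 n φ x ∂μ') / (∫ x, QNgap G q η 0 n (fun _ => (1 : ℝ)) x ∂μ')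
        - ∫ x, φ x ∂(η n)|
      ≤ 2 * b * (1 - (εm / εp) ^ 2) ^ n * (εp / εm) ^ 2 :=
  stmt16_general G q εm εp hq_meas hεm_pos hεle hq_lb hq_ub hG_meas hG_pos hG_bdd η hη μ' φ hφ_meas
    b hφ_b n
end

section
/- Under assumption (H), let μ and μ' be probability measures on X, N ≥ 1, n ≥ 0, and let κ be a Markov kernel from X^N to X satisfying ∫ κ(ζ, A) μ^{⊗N}(dζ) = μ'(A) for every measurable A. For a trajectory (ζ_0,…,ζ_n) ∈ (X^N)^{n+1}, build the kernels Q_p (1 ≤ p ≤ n) from the empirical measures η_p := m(ζ_p) as in the context, and set F(ζ_0,…,ζ_n) := ∫ κ(ζ_0,dx) (Q_1Q_2⋯Q_n)(φ)(x) for a bounded measurable φ. Then E_N[F] = μ'Q^{(n)}(φ), where E_N is expectation under the law of the N-particle system over times 0,…,n started from μ. In particular, taking κ(ζ,·) := μ' constant, E_N[μ'Q_{0,n}(φ)] = μ'Q^{(n)}(φ). -/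
open MeasureTheory ProbabilityTheory Filter
open scoped ENNReal

/-- Empirical measure `m(ζ) = (1/N) Σ_i δ_{ζ^i}` of a particle configuration. -/
noncomputable def emp {X : Type*} [MeasurableSpace X] (N : ℕ) (ζ : Fin N → X) : Measure X :=
  (N : ℝ≥0∞)⁻¹ • ∑ i : Fin N, Measure.dirac (ζ i)

/-- The normalized operator on measures `Φ(η) := ηQ / η(G)` where `Q(x,dy) = G(x) M(x,dy)`. -/
noncomputable def PhiM {X : Type*} [MeasurableSpace X] (G : X → ℝ) (M : Kernel X X)
    (η : Measure X) : Measure X :=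
  (∫⁻ x, ENNReal.ofReal (G x) ∂η)⁻¹ •
    η.bind fun x => ENNReal.ofReal (G x) • (M x : Measure X)

/-- Expectation, under the law of the `N`-particle system
`m₀(dζ_0) ∏_{p=1}^{n} Φ(m(ζ_{p−1}))^{⊗N}(dζ_p)` with initial distribution `m₀` on `X^N`,
of a functional `F` of the trajectory `(ζ_0, …, ζ_n)`. -/
noncomputable def Enn {X : Type*} [MeasurableSpace X] (G : X → ℝ) (M : Kernel X X) (N : ℕ) :
    (n : ℕ) → Measure (Fin N → X) → ((Fin (n + 1) → Fin N → X) → ℝ) → ℝ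
  | 0, m0, F => ∫ ζ, F (fun _ => ζ) ∂m0
  | n + 1, m0, F => ∫ ζ, Enn G M N n
      (Measure.pi fun _ : Fin N => PhiM G M (emp N ζ))
      (fun traj => F (Fin.cons ζ traj)) ∂m0

/-- The sequence of empirical measures `p ↦ m(ζ_{p∧n})` read off a particle trajectory. -/
noncomputable def etaOf {X : Type*} [MeasurableSpace X] (N n : ℕ)
    (traj : Fin (n + 1) → Fin N → X) (p : ℕ) : Measure X :=
  emp N (traj ⟨min p n, by omega⟩)

/-!
Peel off the first generation and induct on `n`. Given `ζ₀`, the particles of `ζ₁` are i.i.d.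
with law `Φ(m(ζ₀))`, so averaging a function over `m(ζ₁)` and then over `ζ₁` gives its
`Φ(m(ζ₀))`-integral. Moreover `flowWeight G q (m(ζ₀)) x ·` is a density of `Q(x, ·)` with respect
to `Φ(m(ζ₀))`, so integrating `Q₁ f (x) = ∫ flowWeight x x' f(x') m(ζ₁)(dx')` over `ζ₁` returns
`Q f (x)`. For the induction the statement is generalised from `κ(ζ₀, dx)` to
`g(x) ρ(ζ₀, dx)` with `ρ(ζ₀)` finite and `g` bounded: one step turns `(ρ, g)` into
`(m, x' ↦ ∫ g(x) flowWeight x x' ρ(ζ₀, dx))` on the remaining `n` generations.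
-/

section General

variable {X : Type*} [MeasurableSpace X]

lemma integral_pos_of_forall_pos {μ : Measure X} [NeZero μ]
    {f : X → ℝ} (hf : ∀ x, 0 < f x) (hf_int : Integrable f μ) : 0 < ∫ x, f x ∂μ := by
  rw [integral_pos_iff_support_of_nonneg (fun x => (hf x).le) hf_int,
    Function.support_eq_univ fun x => (hf x).ne']
  simp [NeZero.ne μ]

lemma integral_withDensity_ofReal {ν : Measure X} {h : X → ℝ}
    (hh : Measurable h) (hh_nonneg : ∀ y, 0 ≤ h y) (f : X → ℝ) :
    ∫ y, f y ∂(ν.withDensity fun y => ENNReal.ofReal (h y)) = ∫ y, h y * f y ∂ν := by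
  rw [integral_withDensity_eq_integral_toReal_smul hh.ennreal_ofReal (by simp)]
  simp [ENNReal.toReal_ofReal (hh_nonneg _)]

lemma integral_integral_eq_of_lintegral_kernel_eq {α β : Type*} [MeasurableSpace α]
    [MeasurableSpace β] {μ : Measure α} [SFinite μ] {κ : Kernel α β} [IsSFiniteKernel κ]
    {μ' : Measure β} (hκ : ∀ A, MeasurableSet A → ∫⁻ a, κ a A ∂μ = μ' A) {f : β → ℝ}
    (hf : Integrable f μ') : ∫ a, ∫ b, f b ∂(κ a) ∂μ = ∫ b, f b ∂μ' := by
  obtain rfl : κ ∘ₘ μ = μ' :=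
    Measure.ext fun A hA => by rw [Measure.bind_apply hA κ.aemeasurable, hκ A hA]
  rw [← Measure.integral_compProd ((Measure.integrable_compProd_snd_iff hf.1).2 hf),
    ← Measure.snd_compProd, Measure.snd, integral_map measurable_snd.aemeasurable
      (by rw [← Measure.snd, Measure.snd_compProd]; exact hf.1)]

end General

section Empirical

variable {X : Type*} [MeasurableSpace X] {N : ℕ}

instance [NeZero N] (ζ : Fin N → X) : IsProbabilityMeasure (emp N ζ) :=
  ⟨by simp [emp, ENNReal.inv_mul_cancel (NeZero.ne (N : ℝ≥0∞))]⟩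

lemma integrable_emp [NeZero N] (ζ : Fin N → X) {f : X → ℝ} (hf : Measurable f) :
    Integrable f (emp N ζ) :=
  (integrable_finsetSum_measure.2 fun i _ =>
    integrable_dirac' hf.stronglyMeasurable (by simp)).smul_measure (by simp [NeZero.ne N])

lemma integral_emp (ζ : Fin N → X) {f : X → ℝ} (hf : Measurable f) :
    ∫ x, f x ∂(emp N ζ) = (N : ℝ)⁻¹ * ∑ i, f (ζ i) := by
  rw [emp, integral_smul_measure, integral_finsetSum_measure fun i _ =>
    integrable_dirac' hf.stronglyMeasurable (by simp)]
  simp [integral_dirac' _ _ hf.stronglyMeasurable]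

lemma integral_integral_emp_comm {ρ : Measure X} [SFinite ρ] (ζ : Fin N → X) {f : X → X → ℝ}
    (hf : Measurable (Function.uncurry f)) (hf_int : ∀ x', Integrable (fun x => f x x') ρ) :
    ∫ x, ∫ x', f x x' ∂(emp N ζ) ∂ρ = ∫ x', ∫ x, f x x' ∂ρ ∂(emp N ζ) := by
  have h_inner : ∀ x, ∫ x', f x x' ∂(emp N ζ) = (N : ℝ)⁻¹ * ∑ i, f x (ζ i) := fun x =>
    integral_emp ζ (hf.comp measurable_prodMk_left)
  have h_outer : Measurable fun x' => ∫ x, f x x' ∂ρ :=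
    hf.stronglyMeasurable.integral_prod_left'.measurable
  rw [integral_emp ζ h_outer]
  simp_rw [h_inner]
  rw [integral_const_mul, integral_finsetSum _ fun i _ => hf_int (ζ i)]

lemma integral_integral_emp_pi [NeZero N] (μ : Measure X) [IsProbabilityMeasure μ]
    {f : X → ℝ} (hf : Measurable f) (hf_int : Integrable f μ) :
    ∫ τ, ∫ x, f x ∂(emp N τ) ∂(Measure.pi fun _ : Fin N => μ) = ∫ x, f x ∂μ := by
  have h_eval : ∀ i : Fin N, ∫ τ, f (τ i) ∂(Measure.pi fun _ : Fin N => μ) = ∫ x, f x ∂μ :=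
    fun i => integral_comp_eval (μ := fun _ => μ) hf.aestronglyMeasurable
  simp_rw [fun τ => integral_emp τ hf]
  rw [integral_const_mul, integral_finsetSum _ fun i _ => integrable_comp_eval hf_int]
  simp [h_eval, NeZero.ne N]

end Empirical

section Density

variable {X : Type*} [MeasurableSpace X] {G : X → ℝ} {M : Kernel X X} {ν : Measure X}
  {q : X → X → ℝ}

def IsKernelDensity (G : X → ℝ) (M : Kernel X X) (ν : Measure X) (q : X → X → ℝ) : Prop :=
  ∀ x (A : Set X), MeasurableSet A →
    ENNReal.ofReal (G x) * M x A = ∫⁻ y in A, ENNReal.ofReal (q x y) ∂ν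

lemma ofReal_smul_eq_withDensity
    (hH : IsKernelDensity G M ν q) (x : X) :
    ENNReal.ofReal (G x) • M x = ν.withDensity fun y => ENNReal.ofReal (q x y) := by
  ext A hA
  rw [Measure.smul_apply, smul_eq_mul, hH x A hA, withDensity_apply _ hA]

lemma Qop_eq_integral (hq_meas : Measurable (Function.uncurry q))
    (hq_nonneg : ∀ x y, 0 ≤ q x y) (hG_nonneg : ∀ x, 0 ≤ G x)
    (hH : IsKernelDensity G M ν q)
    (f : X → ℝ) (x : X) :
    Qop G M f x = ∫ y, q x y * f y ∂ν := by
  rw [← integral_withDensity_ofReal hq_meas.of_uncurry_left (hq_nonneg x),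
    ← ofReal_smul_eq_withDensity hH, integral_smul_measure, Qop,
    ENNReal.toReal_ofReal (hG_nonneg x), smul_eq_mul]

lemma measurable_Qop [SFinite ν] (hq_meas : Measurable (Function.uncurry q))
    (hq_nonneg : ∀ x y, 0 ≤ q x y) (hG_nonneg : ∀ x, 0 ≤ G x)
    (hH : IsKernelDensity G M ν q)
    {f : X → ℝ} (hf : Measurable f) : Measurable (Qop G M f) := by
  simp_rw [funext (Qop_eq_integral hq_meas hq_nonneg hG_nonneg hH f)]
  exact (hq_meas.mul (hf.comp measurable_snd)).stronglyMeasurable.integral_prod_right'.measurable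

lemma norm_Qop_le [IsProbabilityMeasure ν] {εp : ℝ} (hq_meas : Measurable (Function.uncurry q))
    (hq_nonneg : ∀ x y, 0 ≤ q x y) (hq_ub : ∀ x y, q x y ≤ εp) (hG_nonneg : ∀ x, 0 ≤ G x)
    (hH : IsKernelDensity G M ν q)
    {f : X → ℝ} {C : ℝ} (hf : ∀ y, ‖f y‖ ≤ C) (x : X) : ‖Qop G M f x‖ ≤ εp * C := by
  have h_integrand : ∀ y, ‖q x y * f y‖ ≤ εp * C := fun y =>
    norm_mul_le_of_le ((Real.norm_of_nonneg (hq_nonneg x y)).trans_le (hq_ub x y)) (hf y)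
  rw [Qop_eq_integral hq_meas hq_nonneg hG_nonneg hH]
  simpa using norm_integral_le_of_norm_le_const (μ := ν) (Eventually.of_forall h_integrand)

lemma measurable_Qiter [SFinite ν] (hq_meas : Measurable (Function.uncurry q))
    (hq_nonneg : ∀ x y, 0 ≤ q x y) (hG_nonneg : ∀ x, 0 ≤ G x)
    (hH : IsKernelDensity G M ν q)
    {φ : X → ℝ} (hφ : Measurable φ) (n : ℕ) : Measurable (Qiter G M n φ) := by
  induction n with
  | zero => exact hφ
  | succ n ih => exact measurable_Qop hq_meas hq_nonneg hG_nonneg hH ih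

lemma norm_Qiter_le [IsProbabilityMeasure ν] {εp : ℝ}
    (hq_meas : Measurable (Function.uncurry q))
    (hq_nonneg : ∀ x y, 0 ≤ q x y) (hq_ub : ∀ x y, q x y ≤ εp) (hG_nonneg : ∀ x, 0 ≤ G x)
    (hH : IsKernelDensity G M ν q)
    {φ : X → ℝ} {C : ℝ} (hφ : ∀ x, ‖φ x‖ ≤ C) (n : ℕ) (x : X) :
    ‖Qiter G M n φ x‖ ≤ εp ^ n * C := by
  induction n generalizing x with
  | zero => simpa [Qiter] using hφ x
  | succ n ih =>
    rw [pow_succ', mul_assoc]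
    exact norm_Qop_le hq_meas hq_nonneg hq_ub hG_nonneg hH ih x

end Density

section Selection

variable {X : Type*} [MeasurableSpace X] {G : X → ℝ} {M : Kernel X X} {ν : Measure X}
  {q : X → X → ℝ}

lemma measurable_ofReal_smul_kernel (hG_meas : Measurable G) :
    Measurable fun x => ENNReal.ofReal (G x) • M x := by
  refine Measure.measurable_of_measurable_coe _ fun A hA => ?_
  simp only [Measure.smul_apply, smul_eq_mul]
  exact hG_meas.ennreal_ofReal.mul (M.measurable_coe hA)

lemma isProbabilityMeasure_PhiM [IsMarkovKernel M] (hG_meas : Measurable G)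
    (hG_pos : ∀ x, 0 < G x) (η : Measure X) [IsProbabilityMeasure η] (hGη : Integrable G η) :
    IsProbabilityMeasure (PhiM G M η) := by
  constructor
  rw [PhiM, Measure.smul_apply,
    Measure.bind_apply MeasurableSet.univ (measurable_ofReal_smul_kernel hG_meas).aemeasurable]
  simp only [Measure.smul_apply, measure_univ, smul_eq_mul, mul_one]
  rw [← ofReal_integral_eq_lintegral_ofReal hGη (ae_of_all _ fun x => (hG_pos x).le)]
  exact ENNReal.inv_mul_cancel (ENNReal.ofReal_pos.2 (integral_pos_of_forall_pos hG_pos hGη)).ne'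
    ENNReal.ofReal_ne_top

lemma PhiM_eq_withDensity [SFinite ν] (hq_meas : Measurable (Function.uncurry q))
    (hq_nonneg : ∀ x y, 0 ≤ q x y) (hG_meas : Measurable G) (hG_nonneg : ∀ x, 0 ≤ G x)
    (hH : IsKernelDensity G M ν q)
    (η : Measure X) [SFinite η] (hGη : Integrable G η)
    (hqη : ∀ y, Integrable (fun z => q z y) η) :
    PhiM G M η = (ENNReal.ofReal (∫ x, G x ∂η))⁻¹ •
      ν.withDensity fun y => ENNReal.ofReal (∫ z, q z y ∂η) := by
  rw [PhiM, ← ofReal_integral_eq_lintegral_ofReal hGη (ae_of_all _ hG_nonneg)]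
  congr 1
  ext A hA
  rw [Measure.bind_apply hA (measurable_ofReal_smul_kernel hG_meas).aemeasurable,
    withDensity_apply _ hA]
  simp_rw [ofReal_smul_eq_withDensity hH, withDensity_apply _ hA]
  rw [lintegral_lintegral_swap hq_meas.ennreal_ofReal.aemeasurable]
  refine lintegral_congr fun y => ?_
  exact (ofReal_integral_eq_lintegral_ofReal (hqη y) (ae_of_all _ (hq_nonneg · y))).symm

end Selection

section FlowWeight

variable {X : Type*} [MeasurableSpace X] {G : X → ℝ} {M : Kernel X X} {ν : Measure X}
  {q : X → X → ℝ}

noncomputable def flowWeight (G : X → ℝ) (q : X → X → ℝ) (η : Measure X) (x x' : X) : ℝ :=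
  (∫ y, G y ∂η) * q x x' / ∫ y, q y x' ∂η

lemma QNop_eq_integral_flowWeight (η : ℕ → Measure X) (p : ℕ) (f : X → ℝ) (x : X) :
    QNop G q η p f x = ∫ x', flowWeight G q (η p) x x' * f x' ∂(η (p + 1)) :=
  rfl

lemma measurable_flowWeight (hq_meas : Measurable (Function.uncurry q)) (η : Measure X)
    [SFinite η] : Measurable (Function.uncurry (flowWeight G q η)) :=
  (measurable_const.mul hq_meas).div
    (hq_meas.stronglyMeasurable.integral_prod_left'.measurable.comp measurable_snd)

lemma norm_flowWeight_le {εm εp : ℝ} (hεm_pos : 0 < εm) (hq_lb : ∀ x y, εm ≤ q x y)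
    (hq_ub : ∀ x y, q x y ≤ εp) (hG_nonneg : ∀ x, 0 ≤ G x) (η : Measure X)
    [IsProbabilityMeasure η] (hqη : ∀ y, Integrable (fun z => q z y) η) (x x' : X) :
    ‖flowWeight G q η x x'‖ ≤ (∫ y, G y ∂η) * εp / εm := by
  have hG_int : 0 ≤ ∫ y, G y ∂η := integral_nonneg hG_nonneg
  have hq_int : εm ≤ ∫ y, q y x' ∂η := by
    simpa using integral_mono (integrable_const εm) (hqη x') (hq_lb · x')
  have hq_nonneg : 0 ≤ q x x' := hεm_pos.le.trans (hq_lb x x')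
  rw [flowWeight, Real.norm_of_nonneg
    (div_nonneg (mul_nonneg hG_int hq_nonneg) (hεm_pos.le.trans hq_int))]
  exact div_le_div₀ (mul_nonneg hG_int (hq_nonneg.trans (hq_ub x x')))
    (mul_le_mul_of_nonneg_left (hq_ub x x') hG_int) hεm_pos hq_int

lemma integral_flowWeight_mul_PhiM [SFinite ν] (hq_meas : Measurable (Function.uncurry q))
    (hq_pos : ∀ x y, 0 < q x y) (hG_meas : Measurable G) (hG_pos : ∀ x, 0 < G x)
    (hH : IsKernelDensity G M ν q)
    (η : Measure X) [IsProbabilityMeasure η] (hGη : Integrable G η)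
    (hqη : ∀ y, Integrable (fun z => q z y) η) (u : X → ℝ) (x : X) :
    ∫ x', flowWeight G q η x x' * u x' ∂(PhiM G M η) = Qop G M u x := by
  have hq_nonneg : ∀ x y, 0 ≤ q x y := fun x y => (hq_pos x y).le
  have hG_nonneg : ∀ x, 0 ≤ G x := fun x => (hG_pos x).le
  have hG_int : 0 < ∫ y, G y ∂η := integral_pos_of_forall_pos hG_pos hGη
  have hq_int : ∀ x', 0 < ∫ y, q y x' ∂η := fun x' =>
    integral_pos_of_forall_pos (hq_pos · x') (hqη x')
  have hq_int_meas : Measurable fun x' => ∫ y, q y x' ∂η :=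
    hq_meas.stronglyMeasurable.integral_prod_left'.measurable
  rw [PhiM_eq_withDensity hq_meas hq_nonneg hG_meas hG_nonneg hH η hGη hqη,
    integral_smul_measure, integral_withDensity_ofReal hq_int_meas fun x' => (hq_int x').le,
    Qop_eq_integral hq_meas hq_nonneg hG_nonneg hH, ENNReal.toReal_inv,
    ENNReal.toReal_ofReal hG_int.le, smul_eq_mul, ← integral_const_mul]
  congr 1 with x'
  rw [flowWeight]
  field_simp [(hq_int x').ne', hG_int.ne']

end FlowWeight

section RandomFlow

variable {X : Type*} [MeasurableSpace X] {G : X → ℝ} {q : X → X → ℝ}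

lemma QNgap_succ_left (η : ℕ → Measure X) (p k : ℕ) (f : X → ℝ) :
    QNgap G q η (p + 1) k f = QNgap G q (fun j => η (j + 1)) p k f := by
  induction k generalizing p with
  | zero => rfl
  | succ k ih =>
    change QNop G q η (p + 1) (QNgap G q η (p + 2) k f) = _
    rw [ih]
    rfl

lemma measurable_QNgap (hq_meas : Measurable (Function.uncurry q)) (η : ℕ → Measure X)
    [∀ p, SFinite (η p)] {f : X → ℝ} (hf : Measurable f) (p k : ℕ) :
    Measurable (QNgap G q η p k f) := by
  induction k generalizing p with
  | zero => exact hf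
  | succ k ih =>
    exact ((measurable_flowWeight hq_meas (η p)).mul
      ((ih (p + 1)).comp measurable_snd)).stronglyMeasurable.integral_prod_right'.measurable

instance {N n : ℕ} [NeZero N] (traj : Fin (n + 1) → Fin N → X) (p : ℕ) :
    IsProbabilityMeasure (etaOf N n traj p) := by
  unfold etaOf; infer_instance

lemma etaOf_cons_zero {N n : ℕ} (ζ : Fin N → X) (traj : Fin (n + 1) → Fin N → X) :
    etaOf N (n + 1) (Fin.cons ζ traj) 0 = emp N ζ := by
  simp [etaOf]

lemma etaOf_cons_succ {N n : ℕ} (ζ : Fin N → X) (traj : Fin (n + 1) → Fin N → X) (p : ℕ) :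
    etaOf N (n + 1) (Fin.cons ζ traj) (p + 1) = etaOf N n traj p := by
  have h : (⟨min (p + 1) (n + 1), by omega⟩ : Fin (n + 2)) = Fin.succ ⟨min p n, by omega⟩ := by
    ext; simp [Nat.add_min_add_right]
  rw [etaOf, h, Fin.cons_succ, etaOf]

lemma etaOf_zero {N n : ℕ} (traj : Fin (n + 1) → Fin N → X) :
    etaOf N n traj 0 = emp N (traj 0) := by
  simp [etaOf]

lemma QNgap_cons {N n : ℕ} (ζ : Fin N → X) (traj : Fin (n + 1) → Fin N → X) (f : X → ℝ)
    (x : X) :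
    QNgap G q (etaOf N (n + 1) (Fin.cons ζ traj)) 0 (n + 1) f x
      = ∫ x', flowWeight G q (emp N ζ) x x' * QNgap G q (etaOf N n traj) 0 n f x'
          ∂(emp N (traj 0)) := by
  change QNop G q _ 0 (QNgap G q _ (0 + 1) n f) x = _
  rw [QNgap_succ_left, QNop_eq_integral_flowWeight, etaOf_cons_zero, etaOf_cons_succ,
    etaOf_zero]
  simp_rw [etaOf_cons_succ]

end RandomFlow

section ParticleSystem

variable {X : Type*} [MeasurableSpace X] {G : X → ℝ} {M : Kernel X X} {ν : Measure X}
  {q : X → X → ℝ} {εm εp : ℝ} {N : ℕ}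

lemma norm_mul_flowWeight_le (hεm_pos : 0 < εm) (hq_lb : ∀ x y, εm ≤ q x y)
    (hq_ub : ∀ x y, q x y ≤ εp) (hG_nonneg : ∀ x, 0 ≤ G x) (η : Measure X)
    [IsProbabilityMeasure η] (hqη : ∀ y, Integrable (fun z => q z y) η) {g : X → ℝ} {Cg : ℝ}
    (hg_bdd : ∀ x, ‖g x‖ ≤ Cg) (x x' : X) :
    ‖g x * flowWeight G q η x x'‖ ≤ Cg * ((∫ y, G y ∂η) * εp / εm) :=
  norm_mul_le_of_le (hg_bdd x) (norm_flowWeight_le hεm_pos hq_lb hq_ub hG_nonneg η hqη x x')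

lemma integral_mul_QNgap_cons [NeZero N] {n : ℕ} (hq_meas : Measurable (Function.uncurry q))
    (hεm_pos : 0 < εm) (hq_lb : ∀ x y, εm ≤ q x y) (hq_ub : ∀ x y, q x y ≤ εp)
    (hG_nonneg : ∀ x, 0 ≤ G x) {ρ : Measure X} [IsFiniteMeasure ρ] {g : X → ℝ}
    (hg : Measurable g) {Cg : ℝ} (hg_bdd : ∀ x, ‖g x‖ ≤ Cg) {φ : X → ℝ} (hφ : Measurable φ)
    (ζ : Fin N → X) (traj : Fin (n + 1) → Fin N → X) :
    ∫ x, g x * QNgap G q (etaOf N (n + 1) (Fin.cons ζ traj)) 0 (n + 1) φ x ∂ρ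
      = ∫ x', (∫ x, g x * flowWeight G q (emp N ζ) x x' ∂ρ) *
          QNgap G q (etaOf N n traj) 0 n φ x' ∂(emp N (traj 0)) := by
  have hqη : ∀ y, Integrable (fun z => q z y) (emp N ζ) := fun y =>
    integrable_emp ζ hq_meas.of_uncurry_right
  have hgW : Measurable fun p : X × X => g p.1 * flowWeight G q (emp N ζ) p.1 p.2 :=
    (hg.comp measurable_fst).mul (measurable_flowWeight hq_meas _)
  have hgW_int : ∀ x', Integrable (fun x => g x * flowWeight G q (emp N ζ) x x') ρ := fun x' =>
    .of_bound (hgW.comp measurable_prodMk_right).aestronglyMeasurable _ (ae_of_all _ fun x =>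
      norm_mul_flowWeight_le hεm_pos hq_lb hq_ub hG_nonneg _ hqη hg_bdd x x')
  have hψ := measurable_QNgap (G := G) hq_meas (etaOf N n traj) hφ 0 n
  simp_rw [QNgap_cons, ← integral_const_mul, ← mul_assoc]
  rw [integral_integral_emp_comm (traj 0)
    (f := fun x x' => g x * flowWeight G q (emp N ζ) x x' * QNgap G q (etaOf N n traj) 0 n φ x')
    (hgW.mul (hψ.comp measurable_snd)) fun x' => (hgW_int x').mul_const _]
  simp_rw [integral_mul_const]

lemma integral_PhiM_mul_integral_flowWeight [IsMarkovKernel M] [SFinite ν]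
    (hq_meas : Measurable (Function.uncurry q)) (hεm_pos : 0 < εm) (hq_lb : ∀ x y, εm ≤ q x y)
    (hq_ub : ∀ x y, q x y ≤ εp) (hG_meas : Measurable G) (hG_pos : ∀ x, 0 < G x)
    (hH : IsKernelDensity G M ν q)
    (η : Measure X) [IsProbabilityMeasure η] (hGη : Integrable G η)
    (hqη : ∀ y, Integrable (fun z => q z y) η) {ρ : Measure X} [IsFiniteMeasure ρ]
    {g : X → ℝ} (hg : Measurable g) {Cg : ℝ} (hg_bdd : ∀ x, ‖g x‖ ≤ Cg)
    {u : X → ℝ} (hu : Measurable u) {Cu : ℝ} (hu_bdd : ∀ x, ‖u x‖ ≤ Cu) :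
    ∫ x', (∫ x, g x * flowWeight G q η x x' ∂ρ) * u x' ∂(PhiM G M η)
      = ∫ x, g x * Qop G M u x ∂ρ := by
  have hG_nonneg : ∀ x, 0 ≤ G x := fun x => (hG_pos x).le
  have hq_pos : ∀ x y, 0 < q x y := fun x y => hεm_pos.trans_le (hq_lb x y)
  have := isProbabilityMeasure_PhiM (M := M) hG_meas hG_pos η hGη
  have hF : Measurable fun p : X × X => g p.2 * flowWeight G q η p.2 p.1 * u p.1 :=
    ((hg.comp measurable_snd).mul ((measurable_flowWeight hq_meas η).comp measurable_swap)).mul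
      (hu.comp measurable_fst)
  have hF_int : Integrable (Function.uncurry fun x' x => g x * flowWeight G q η x x' * u x')
      ((PhiM G M η).prod ρ) :=
    .of_bound hF.aestronglyMeasurable _ (ae_of_all _ fun p => norm_mul_le_of_le
      (norm_mul_flowWeight_le hεm_pos hq_lb hq_ub hG_nonneg η hqη hg_bdd p.2 p.1) (hu_bdd p.1))
  calc ∫ x', (∫ x, g x * flowWeight G q η x x' ∂ρ) * u x' ∂(PhiM G M η)
      = ∫ x', ∫ x, g x * flowWeight G q η x x' * u x' ∂ρ ∂(PhiM G M η) := by
        simp_rw [integral_mul_const]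
    _ = ∫ x, ∫ x', g x * flowWeight G q η x x' * u x' ∂(PhiM G M η) ∂ρ :=
        integral_integral_swap hF_int
    _ = ∫ x, g x * Qop G M u x ∂ρ := by
        simp_rw [mul_assoc, integral_const_mul,
          integral_flowWeight_mul_PhiM hq_meas hq_pos hG_meas hG_pos hH η hGη hqη]

theorem Enn_integral_mul_QNgap [IsMarkovKernel M] [IsProbabilityMeasure ν] [NeZero N]
    (hq_meas : Measurable (Function.uncurry q)) (hεm_pos : 0 < εm) (hq_lb : ∀ x y, εm ≤ q x y)
    (hq_ub : ∀ x y, q x y ≤ εp) (hG_meas : Measurable G) (hG_pos : ∀ x, 0 < G x)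
    (hH : IsKernelDensity G M ν q)
    {φ : X → ℝ} (hφ : Measurable φ) {Cφ : ℝ} (hφ_bdd : ∀ x, ‖φ x‖ ≤ Cφ) (n : ℕ)
    (m₀ : Measure (Fin N → X)) (ρ : (Fin N → X) → Measure X) [∀ ζ, IsFiniteMeasure (ρ ζ)]
    {g : X → ℝ} (hg : Measurable g) {Cg : ℝ} (hg_bdd : ∀ x, ‖g x‖ ≤ Cg) :
    Enn G M N n m₀ (fun traj => ∫ x, g x * QNgap G q (etaOf N n traj) 0 n φ x ∂(ρ (traj 0)))
      = ∫ ζ, ∫ x, g x * Qiter G M n φ x ∂(ρ ζ) ∂m₀ := by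
  induction n generalizing m₀ ρ g Cg with
  | zero => rfl
  | succ n ih =>
    refine integral_congr_ae (ae_of_all _ fun ζ => ?_)
    have hG_nonneg : ∀ x, 0 ≤ G x := fun x => (hG_pos x).le
    have hq_nonneg : ∀ x y, 0 ≤ q x y := fun x y => hεm_pos.le.trans (hq_lb x y)
    have hGη : Integrable G (emp N ζ) := integrable_emp ζ hG_meas
    have hqη : ∀ y, Integrable (fun z => q z y) (emp N ζ) := fun y =>
      integrable_emp ζ hq_meas.of_uncurry_right
    have := isProbabilityMeasure_PhiM (M := M) hG_meas hG_pos (emp N ζ) hGη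
    set w : X → ℝ := fun x' => ∫ x, g x * flowWeight G q (emp N ζ) x x' ∂(ρ ζ)
    have hw : Measurable w := StronglyMeasurable.measurable <|
      ((hg.comp measurable_fst).mul (measurable_flowWeight hq_meas _)).stronglyMeasurable
        |>.integral_prod_left'
    have hw_bdd : ∀ x', ‖w x'‖ ≤ Cg * ((∫ y, G y ∂(emp N ζ)) * εp / εm) * (ρ ζ).real Set.univ :=
      fun x' => norm_integral_le_of_norm_le_const (ae_of_all _ fun x =>
        norm_mul_flowWeight_le hεm_pos hq_lb hq_ub hG_nonneg _ hqη hg_bdd x x')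
    have hQ := measurable_Qiter hq_meas hq_nonneg hG_nonneg hH hφ n
    have hQ_bdd := norm_Qiter_le hq_meas hq_nonneg hq_ub hG_nonneg hH hφ_bdd n
    calc Enn G M N n (Measure.pi fun _ => PhiM G M (emp N ζ)) (fun traj =>
          ∫ x, g x * QNgap G q (etaOf N (n + 1) (Fin.cons ζ traj)) 0 (n + 1) φ x ∂(ρ ζ))
        = Enn G M N n (Measure.pi fun _ => PhiM G M (emp N ζ)) (fun traj =>
            ∫ x', w x' * QNgap G q (etaOf N n traj) 0 n φ x' ∂(emp N (traj 0))) := by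
          congr 1 with traj
          exact integral_mul_QNgap_cons hq_meas hεm_pos hq_lb hq_ub hG_nonneg hg hg_bdd hφ ζ traj
      _ = ∫ τ, ∫ x', w x' * Qiter G M n φ x' ∂(emp N τ)
            ∂(Measure.pi fun _ => PhiM G M (emp N ζ)) := ih _ (emp N) hw hw_bdd
      _ = ∫ x', w x' * Qiter G M n φ x' ∂(PhiM G M (emp N ζ)) :=
          integral_integral_emp_pi _ (hw.mul hQ) (.of_bound (hw.mul hQ).aestronglyMeasurable _
            (ae_of_all _ fun x' => norm_mul_le_of_le (hw_bdd x') (hQ_bdd x')))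
      _ = ∫ x, g x * Qiter G M (n + 1) φ x ∂(ρ ζ) :=
          integral_PhiM_mul_integral_flowWeight hq_meas hεm_pos hq_lb hq_ub hG_meas hG_pos hH
            (emp N ζ) hGη hqη hg hg_bdd hQ hQ_bdd

end ParticleSystem

theorem stmt17_general {X : Type*} [MeasurableSpace X]
    (G : X → ℝ) (M : Kernel X X) [IsMarkovKernel M]
    (ν : Measure X) [IsProbabilityMeasure ν]
    (q : X → X → ℝ) (εm εp : ℝ)
    (hq_meas : Measurable fun p : X × X => q p.1 p.2)
    (hεm_pos : 0 < εm)
    (hq_lb : ∀ x y, εm ≤ q x y) (hq_ub : ∀ x y, q x y ≤ εp)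
    (hG_meas : Measurable G) (hG_pos : ∀ x, 0 < G x)
    (hH : ∀ x (A : Set X), MeasurableSet A →
      ENNReal.ofReal (G x) * M x A = ∫⁻ y in A, ENNReal.ofReal (q x y) ∂ν)
    (μ μ' : Measure X) [IsProbabilityMeasure μ] [IsProbabilityMeasure μ']
    (N : ℕ) (hN : 1 ≤ N) (n : ℕ)
    (κ : Kernel (Fin N → X) X) [IsMarkovKernel κ]
    (hκ : ∀ A : Set X, MeasurableSet A →
      ∫⁻ ζ, κ ζ A ∂(Measure.pi fun _ : Fin N => μ) = μ' A)
    (φ : X → ℝ) (hφ_meas : Measurable φ) (hφ_bdd : ∃ c, ∀ x, |φ x| ≤ c) :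
    Enn G M N n (Measure.pi fun _ : Fin N => μ)
        (fun traj => ∫ x, QNgap G q (etaOf N n traj) 0 n φ x ∂(κ (traj 0)))
      = ∫ x, Qiter G M n φ x ∂μ' ∧
    Enn G M N n (Measure.pi fun _ : Fin N => μ)
        (fun traj => ∫ x, QNgap G q (etaOf N n traj) 0 n φ x ∂μ')
      = ∫ x, Qiter G M n φ x ∂μ' := by
  obtain ⟨Cφ, hφ_bdd⟩ := hφ_bdd
  have : NeZero N := ⟨by omega⟩
  have hφ_norm : ∀ x, ‖φ x‖ ≤ Cφ := fun x => (Real.norm_eq_abs _).trans_le (hφ_bdd x)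
  have hq_nonneg : ∀ x y, 0 ≤ q x y := fun x y => hεm_pos.le.trans (hq_lb x y)
  have hG_nonneg : ∀ x, 0 ≤ G x := fun x => (hG_pos x).le
  have hQ_int : Integrable (Qiter G M n φ) μ' :=
    .of_bound (measurable_Qiter hq_meas hq_nonneg hG_nonneg hH hφ_meas n).aestronglyMeasurable _
      (ae_of_all _ (norm_Qiter_le hq_meas hq_nonneg hq_ub hG_nonneg hH hφ_norm n))
  have h_flow (ρ : (Fin N → X) → Measure X) [∀ ζ, IsFiniteMeasure (ρ ζ)] :=
    Enn_integral_mul_QNgap hq_meas hεm_pos hq_lb hq_ub hG_meas hG_pos hH hφ_meas hφ_norm n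
      (Measure.pi fun _ => μ) ρ (g := fun _ => 1) measurable_const (Cg := 1) (fun _ => by simp)
  simp only [one_mul] at h_flow
  exact ⟨(h_flow (fun ζ => κ ζ)).trans (integral_integral_eq_of_lintegral_kernel_eq hκ hQ_int),
    (h_flow fun _ => μ').trans (by simp)⟩

theorem stmt17 {X : Type*} [MeasurableSpace X]
    (G : X → ℝ) (M : Kernel X X) [IsMarkovKernel M]
    (ν : Measure X) [IsProbabilityMeasure ν]
    (q : X → X → ℝ) (εm εp : ℝ)
    (hq_meas : Measurable fun p : X × X => q p.1 p.2)
    (hεm_pos : 0 < εm) (hεle : εm ≤ εp)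
    (hq_lb : ∀ x y, εm ≤ q x y) (hq_ub : ∀ x y, q x y ≤ εp)
    (hG_meas : Measurable G) (hG_pos : ∀ x, 0 < G x) (hG_bdd : ∃ c, ∀ x, G x ≤ c)
    (hH : ∀ x (A : Set X), MeasurableSet A →
      ENNReal.ofReal (G x) * M x A = ∫⁻ y in A, ENNReal.ofReal (q x y) ∂ν)
    (μ μ' : Measure X) [IsProbabilityMeasure μ] [IsProbabilityMeasure μ']
    (N : ℕ) (hN : 1 ≤ N) (n : ℕ)
    (κ : Kernel (Fin N → X) X) [IsMarkovKernel κ]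
    (hκ : ∀ A : Set X, MeasurableSet A →
      ∫⁻ ζ, κ ζ A ∂(Measure.pi fun _ : Fin N => μ) = μ' A)
    (φ : X → ℝ) (hφ_meas : Measurable φ) (hφ_bdd : ∃ c, ∀ x, |φ x| ≤ c) :
    Enn G M N n (Measure.pi fun _ : Fin N => μ)
        (fun traj => ∫ x, QNgap G q (etaOf N n traj) 0 n φ x ∂(κ (traj 0)))
      = ∫ x, Qiter G M n φ x ∂μ' ∧
    Enn G M N n (Measure.pi fun _ : Fin N => μ)
        (fun traj => ∫ x, QNgap G q (etaOf N n traj) 0 n φ x ∂μ')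
      = ∫ x, Qiter G M n φ x ∂μ' :=
  stmt17_general G M ν q εm εp hq_meas hεm_pos hq_lb hq_ub hG_meas hG_pos hH μ μ' N hN n κ hκ φ
    hφ_meas hφ_bdd
end

section
/- Under assumption (H) with G := exp(−U), and given a principal eigen-triple (λ⋆, η⋆, h⋆) with twisted kernel P⋆, the Bellman average-cost optimality equation is solved by V⋆ := −log h⋆ and ς⋆ := −log λ⋆: for every x ∈ X, V⋆(x) + ς⋆ = inf_{h∈H} [ U(x) + KL(M̌_h‖M)(x) + M̌_h(V⋆)(x) ]; moreover the infimum is attained at h = h⋆, and M̌_{h⋆}(x,dy) = P⋆(x,dy) for every x. -/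
/-!
With `p = h / ∫ h` and `r = g / ∫ g` the densities of the twisted measures, Gibbs' inequality
`p - r ≤ p log (p / r)` integrates to the Donsker–Varadhan bound
`KL(M̌_h‖M) + M̌_h(-log g) ≥ -log M(g)`, with equality at `h = g`.
For `g = h⋆`, the eigen-equation `e^{-U} M(h⋆) = λ⋆ h⋆` turns `U - log M(h⋆)` into
`-log h⋆ - log λ⋆`, and the same equation identifies `M̌_{h⋆}` with `P⋆`.
-/

open MeasureTheory ProbabilityTheory Filter
open scoped ENNReal

/-- `M(h)(x) = ∫ h(y) M(x,dy)`. -/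
noncomputable def Mint {X : Type*} [MeasurableSpace X] (M : Kernel X X)
    (h : X → ℝ) (x : X) : ℝ :=
  ∫ y, h y ∂(M x)

/-- The twisted kernel `M̌_h(x,dy) := M(x,dy) h(y) / M(h)(x)` acting on a function `V`. -/
noncomputable def Mcheck {X : Type*} [MeasurableSpace X] (M : Kernel X X)
    (h : X → ℝ) (V : X → ℝ) (x : X) : ℝ :=
  ∫ y, h y / Mint M h x * V y ∂(M x)

/-- The Kullback–Leibler divergence
`KL(M̌_h‖M)(x) = ∫ M̌_h(x,dy) log (dM̌_h(x,·)/dM(x,·))(y)`,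
using `dM̌_h(x,·)/dM(x,·) = h/M(h)(x)`. -/
noncomputable def KLdiv {X : Type*} [MeasurableSpace X] (M : Kernel X X)
    (h : X → ℝ) (x : X) : ℝ :=
  ∫ y, h y / Mint M h x * Real.log (h y / Mint M h x) ∂(M x)

/-- The class `H` of bounded measurable functions `h : X → (0,∞)` with
`sup_{x,y} h(x)/h(y) < ∞`, i.e. bounded above and bounded below away from `0`. -/
def memH {X : Type*} [MeasurableSpace X] (h : X → ℝ) : Prop :=
  Measurable h ∧ (∃ a : ℝ, 0 < a ∧ ∀ x, a ≤ h x) ∧ (∃ b : ℝ, ∀ x, h x ≤ b)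

open Real

lemma sub_le_mul_log_div {p r : ℝ} (hp : 0 < p) (hr : 0 < r) : p - r ≤ p * log (p / r) := by
  have key := one_sub_inv_le_log_of_pos (div_pos hp hr)
  rw [inv_div] at key
  calc p - r = p * (1 - r / p) := by field_simp
    _ ≤ p * log (p / r) := mul_le_mul_of_nonneg_left key hp.le

section memH

variable {X : Type*} [MeasurableSpace X] {h : X → ℝ}

lemma memH.pos (hh : memH h) (x : X) : 0 < h x := by
  obtain ⟨-, ⟨a, ha, hla⟩, -⟩ := hh
  exact ha.trans_le (hla x)

lemma memH.div_const (hh : memH h) {c : ℝ} (hc : 0 < c) : memH fun y => h y / c := by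
  obtain ⟨hm, ⟨a, ha, hla⟩, ⟨b, hub⟩⟩ := hh
  exact ⟨hm.div_const c,
    ⟨a / c, div_pos ha hc, fun x => div_le_div_of_nonneg_right (hla x) hc.le⟩,
    ⟨b / c, fun x => div_le_div_of_nonneg_right (hub x) hc.le⟩⟩

lemma memH.exists_abs_log_le (hh : memH h) : ∃ C, ∀ x, |log (h x)| ≤ C := by
  obtain ⟨-, ⟨a, ha, hla⟩, ⟨b, hub⟩⟩ := hh
  refine ⟨|log a| + |log b|, fun x => abs_le.2 ⟨?_, ?_⟩⟩
  · have := log_le_log ha (hla x)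
    linarith [neg_abs_le (log a), abs_nonneg (log b)]
  · have := log_le_log (ha.trans_le (hla x)) (hub x)
    linarith [le_abs_self (log b), abs_nonneg (log a)]

lemma memH.integrable (hh : memH h) (μ : Measure X) [IsFiniteMeasure μ] : Integrable h μ := by
  obtain ⟨hm, ⟨a, ha, hla⟩, ⟨b, hub⟩⟩ := hh
  refine .of_bound hm.aestronglyMeasurable b (ae_of_all _ fun x => ?_)
  rw [Real.norm_of_nonneg (ha.le.trans (hla x))]
  exact hub x

lemma memH.integrable_mul_log {g : X → ℝ} (hh : memH h) (hg : memH g) (μ : Measure X)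
    [IsFiniteMeasure μ] : Integrable (fun y => h y * log (g y)) μ := by
  obtain ⟨C, hC⟩ := hg.exists_abs_log_le
  exact (hh.integrable μ).mul_bdd hg.1.log.aestronglyMeasurable (ae_of_all _ hC)

lemma memH.integrable_mul_neg_log {g : X → ℝ} (hh : memH h) (hg : memH g) (μ : Measure X)
    [IsFiniteMeasure μ] : Integrable (fun y => h y * -log (g y)) μ := by
  simpa only [mul_neg] using (hh.integrable_mul_log hg μ).fun_neg

lemma memH.integral_pos (hh : memH h) (μ : Measure X) [IsProbabilityMeasure μ] :
    0 < ∫ y, h y ∂μ := by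
  obtain ⟨a, ha, hla⟩ := hh.2.1
  have : a ≤ ∫ y, h y ∂μ := by
    simpa using integral_mono (integrable_const a) (hh.integrable μ) hla
  linarith

end memH

section Gibbs

variable {X : Type*} [MeasurableSpace X] {μ : Measure X} [IsProbabilityMeasure μ]
  {h g : X → ℝ}

lemma integral_div_integral_self (hh : memH h) :
    ∫ y, h y / ∫ z, h z ∂μ ∂μ = 1 := by
  rw [integral_div, div_self (hh.integral_pos μ).ne']

lemma tilted_entropy_add_cross_entropy_self (hg : memH g) :
    ∫ y, g y / (∫ z, g z ∂μ) * log (g y / ∫ z, g z ∂μ) ∂μ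
      + ∫ y, g y / (∫ z, g z ∂μ) * -log (g y) ∂μ = -log (∫ z, g z ∂μ) := by
  set c := ∫ z, g z ∂μ
  have hc : 0 < c := hg.integral_pos μ
  have hp : memH fun y => g y / c := hg.div_const hc
  calc _ = ∫ y, g y / c * log (g y / c) + g y / c * -log (g y) ∂μ :=
        (integral_add (hp.integrable_mul_log hp μ) (hp.integrable_mul_neg_log hg μ)).symm
    _ = ∫ y, -log c * (g y / c) ∂μ := integral_congr_ae <| ae_of_all _ fun y => by
        simp only [log_div (hg.pos y).ne' hc.ne']
        ring
    _ = -log c := by rw [integral_const_mul, integral_div_integral_self hg, mul_one]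

lemma neg_log_integral_le_tilted_entropy_add_cross_entropy (hh : memH h) (hg : memH g) :
    -log (∫ z, g z ∂μ) ≤ ∫ y, h y / (∫ z, h z ∂μ) * log (h y / ∫ z, h z ∂μ) ∂μ
      + ∫ y, h y / (∫ z, h z ∂μ) * -log (g y) ∂μ := by
  set c := ∫ z, h z ∂μ
  set d := ∫ z, g z ∂μ
  have hc : 0 < c := hh.integral_pos μ
  have hd : 0 < d := hg.integral_pos μ
  have hp : memH fun y => h y / c := hh.div_const hc
  have hr : memH fun y => g y / d := hg.div_const hd
  have hcross := hp.integrable_mul_neg_log hg μ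
  have pointwise : ∀ y, h y / c - g y / d - h y / c * log d
      ≤ h y / c * log (h y / c) + h y / c * -log (g y) := fun y => by
    have key := sub_le_mul_log_div (hp.pos y) (hr.pos y)
    rw [log_div (hp.pos y).ne' (hr.pos y).ne', log_div (hg.pos y).ne' hd.ne'] at key
    linarith
  have hmono : ∫ y, h y / c - g y / d - h y / c * log d ∂μ
      ≤ ∫ y, h y / c * log (h y / c) + h y / c * -log (g y) ∂μ := integral_mono
    (Integrable.sub' (Integrable.sub' (hp.integrable μ) (hr.integrable μ))
      ((hp.integrable μ).mul_const (log d)))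
    ((hp.integrable_mul_log hp μ).add hcross) pointwise
  rw [integral_add (hp.integrable_mul_log hp μ) hcross, integral_sub
    (Integrable.sub' (hp.integrable μ) (hr.integrable μ)) ((hp.integrable μ).mul_const (log d)),
    integral_sub (hp.integrable μ) (hr.integrable μ), integral_mul_const,
    integral_div_integral_self hh, integral_div_integral_self hg] at hmono
  linarith

end Gibbs

section Kernel

variable {X : Type*} [MeasurableSpace X] {M : Kernel X X} [IsMarkovKernel M] {h g : X → ℝ}

lemma memH.Mint_pos (hg : memH g) (x : X) : 0 < Mint M g x :=
  hg.integral_pos (M x)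

lemma KLdiv_add_Mcheck_neg_log_self (hg : memH g) (x : X) :
    KLdiv M g x + Mcheck M g (fun y => -log (g y)) x = -log (Mint M g x) :=
  tilted_entropy_add_cross_entropy_self hg

lemma neg_log_Mint_le_KLdiv_add_Mcheck_neg_log (hh : memH h) (hg : memH g) (x : X) :
    -log (Mint M g x) ≤ KLdiv M h x + Mcheck M h (fun y => -log (g y)) x :=
  neg_log_integral_le_tilted_entropy_add_cross_entropy hh hg

omit [IsMarkovKernel M] in
lemma Mcheck_eq_Qop_div (G V : X → ℝ) {x : X} (hG : G x ≠ 0) :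
    Mcheck M h V x = Qop G M (fun y => h y * V y) x / (G x * Mint M h x) := by
  simp only [Mcheck, Qop]
  rw [mul_div_mul_left _ _ hG, ← integral_div]
  simp only [div_mul_eq_mul_div]

end Kernel

theorem stmt19_general {X : Type*} [MeasurableSpace X]
    (U : X → ℝ)
    (M : Kernel X X) [IsMarkovKernel M]
    (εm εp : ℝ)
    (hεm_pos : 0 < εm) (hεle : εm ≤ εp)
    -- a principal eigen-triple (λ⋆, η⋆, h⋆) for Q = exp(−U)·M, with twisted kernel P⋆
    (lam : ℝ) (hlam_pos : 0 < lam)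
    (hs : X → ℝ) (hhs_meas : Measurable hs)
    (hhs_lb : ∀ x, εm / εp ≤ hs x) (hhs_ub : ∀ x, hs x ≤ εp / εm)
    (h_fun_eq : ∀ x, Qop (fun x => Real.exp (-U x)) M hs x = lam * hs x) :
    -- V⋆ := −log h⋆ and ς⋆ := −log λ⋆ solve the Bellman average-cost optimality equation
    (∀ x : X, -Real.log (hs x) + -Real.log lam
      = ⨅ h : {h : X → ℝ // memH h},
          (U x + KLdiv M h.1 x + Mcheck M h.1 (fun y => -Real.log (hs y)) x)) ∧
    -- the infimum is attained at h = h⋆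
    memH hs ∧
    (∀ x : X, U x + KLdiv M hs x + Mcheck M hs (fun y => -Real.log (hs y)) x
      = -Real.log (hs x) + -Real.log lam) ∧
    -- M̌_{h⋆} = P⋆
    (∀ x : X, ∀ A : Set X, MeasurableSet A →
      Mcheck M hs (A.indicator fun _ => (1 : ℝ)) x
        = Qop (fun x => Real.exp (-U x)) M
            (fun y => hs y * A.indicator (fun _ => (1 : ℝ)) y) x / (lam * hs x)) := by
  have hmem : memH hs := ⟨hhs_meas,
    ⟨εm / εp, div_pos hεm_pos (hεm_pos.trans_le hεle), hhs_lb⟩, ⟨εp / εm, hhs_ub⟩⟩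
  have heig : ∀ x, exp (-U x) * Mint M hs x = lam * hs x := h_fun_eq
  have hlog_eig : ∀ x, U x - log (Mint M hs x) = -log (hs x) + -log lam := fun x => by
    have := congrArg log (heig x)
    rw [log_mul (exp_ne_zero _) (hmem.Mint_pos x).ne', log_exp,
      log_mul hlam_pos.ne' (hmem.pos x).ne'] at this
    linarith
  have hattained : ∀ x, U x + KLdiv M hs x + Mcheck M hs (fun y => -log (hs y)) x
      = -log (hs x) + -log lam := fun x => by
    rw [add_assoc, KLdiv_add_Mcheck_neg_log_self hmem, ← hlog_eig]
    ring
  have hlower : ∀ h : {h : X → ℝ // memH h}, ∀ x,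
      -log (hs x) + -log lam ≤ U x + KLdiv M h.1 x + Mcheck M h.1 (fun y => -log (hs y)) x :=
    fun h x => by
      linarith [neg_log_Mint_le_KLdiv_add_Mcheck_neg_log (M := M) h.2 hmem x, hlog_eig x]
  refine ⟨fun x => ?_, hmem, hattained, fun x A _ => ?_⟩
  · have : Nonempty {h : X → ℝ // memH h} := ⟨⟨hs, hmem⟩⟩
    have hleast : IsLeast (Set.range fun h : {h : X → ℝ // memH h} =>
        U x + KLdiv M h.1 x + Mcheck M h.1 (fun y => -log (hs y)) x) (-log (hs x) + -log lam) :=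
      ⟨⟨⟨hs, hmem⟩, hattained x⟩, by rintro _ ⟨h, rfl⟩; exact hlower h x⟩
    exact hleast.isGLB.ciInf_eq.symm
  · rw [Mcheck_eq_Qop_div (fun x => exp (-U x)) _ (exp_ne_zero (-U x)), ← heig]

theorem stmt19 {X : Type*} [MeasurableSpace X]
    (U : X → ℝ) (hU_meas : Measurable U) (hU_bdd : ∃ c, ∀ x, |U x| ≤ c)
    (M : Kernel X X) [IsMarkovKernel M]
    (ν : Measure X) [IsProbabilityMeasure ν]
    (q : X → X → ℝ) (εm εp : ℝ)
    (hq_meas : Measurable fun p : X × X => q p.1 p.2)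
    (hεm_pos : 0 < εm) (hεle : εm ≤ εp)
    (hq_lb : ∀ x y, εm ≤ q x y) (hq_ub : ∀ x y, q x y ≤ εp)
    (hH : ∀ x (A : Set X), MeasurableSet A →
      ENNReal.ofReal (Real.exp (-U x)) * M x A = ∫⁻ y in A, ENNReal.ofReal (q x y) ∂ν)
    -- a principal eigen-triple (λ⋆, η⋆, h⋆) for Q = exp(−U)·M, with twisted kernel P⋆
    (lam : ℝ) (hlam_pos : 0 < lam)
    (ηs : Measure X) [IsProbabilityMeasure ηs]
    (hs : X → ℝ) (hhs_meas : Measurable hs)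
    (hhs_lb : ∀ x, εm / εp ≤ hs x) (hhs_ub : ∀ x, hs x ≤ εp / εm)
    (h_meas_eq : ∀ A : Set X, MeasurableSet A →
      ∫⁻ x, ENNReal.ofReal (Real.exp (-U x)) * M x A ∂ηs = ENNReal.ofReal lam * ηs A)
    (h_fun_eq : ∀ x, Qop (fun x => Real.exp (-U x)) M hs x = lam * hs x)
    (h_norm : ∫ x, hs x ∂ηs = 1) :
    -- V⋆ := −log h⋆ and ς⋆ := −log λ⋆ solve the Bellman average-cost optimality equation
    (∀ x : X, -Real.log (hs x) + -Real.log lam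
      = ⨅ h : {h : X → ℝ // memH h},
          (U x + KLdiv M h.1 x + Mcheck M h.1 (fun y => -Real.log (hs y)) x)) ∧
    -- the infimum is attained at h = h⋆
    memH hs ∧
    (∀ x : X, U x + KLdiv M hs x + Mcheck M hs (fun y => -Real.log (hs y)) x
      = -Real.log (hs x) + -Real.log lam) ∧
    -- M̌_{h⋆} = P⋆
    (∀ x : X, ∀ A : Set X, MeasurableSet A →
      Mcheck M hs (A.indicator fun _ => (1 : ℝ)) x
        = Qop (fun x => Real.exp (-U x)) M
            (fun y => hs y * A.indicator (fun _ => (1 : ℝ)) y) x / (lam * hs x)) :=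
  stmt19_general U M εm εp hεm_pos hεle lam hlam_pos hs hhs_meas hhs_lb hhs_ub h_fun_eq
end
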